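/- Let Q ∈ ℂ^{m×n} (n < m) have orthonormal columns and let z ∈ ℂ^m be nonzero with z ∉ Range(Q). Then among all real scalings δ > 0, the choice δ = 1/‖z‖ minimizes the spectral condition number κ₂([Q δz]). -/

import Mathlib

/-!
Write `y = δ z`, `a = ‖y‖²` and `b = ‖Qᴴy‖²`; then `b < a` because `z ∉ Range Q`. As `QᴴQ = 1`,
the Gram matrix `[Q y]ᴴ[Q y]` is `[[1, Qᴴy], [yᴴQ, a]]`, so each of its eigenvalues is `1` or a
root of `(t - 1)(t - a) = b`. Since `1` lies between the two roots `λ₋ ≤ λ₊`, these bound the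
spectrum, and both are eigenvalues when `n > 0` (for `n = 0` the condition number is `1`).
By Vieta, `r = λ₊ / λ₋ = κ²` satisfies
`r + r⁻¹ = (1 + a)² / (a - b) - 2 = (1 + δ²‖z‖²)² / (δ² (‖z‖² - ‖Qᴴz‖²)) - 2`,
and `r ↦ r + r⁻¹` increases on `[1, ∞)`, so `κ` is smallest where this is, which by AM-GM is at
`δ²‖z‖² = 1`.
-/

open Matrix

/-- The matrix `[Q z]`: `Q` with the column `z` appended. -/
def appendCol {m n : ℕ} (Q : Matrix (Fin m) (Fin n) ℂ) (z : Fin m → ℂ) :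
    Matrix (Fin m) (Fin (n + 1)) ℂ :=
  Matrix.of fun i j => Fin.lastCases (z i) (fun k => Q i k) j

/-- The spectral condition number: ratio of largest to smallest singular value,
singular values being the square roots of the eigenvalues of `MᴴM`. -/
noncomputable def cond2 {m n : ℕ} (M : Matrix (Fin m) (Fin (n + 1)) ℂ) : ℝ :=
  (⨆ i, Real.sqrt ((isHermitian_conjTranspose_mul_self M).eigenvalues i)) /
    (⨅ i, Real.sqrt ((isHermitian_conjTranspose_mul_self M).eigenvalues i))

noncomputable abbrev gramEigenvalues {m k : ℕ} (M : Matrix (Fin m) (Fin k) ℂ) : Fin k → ℝ :=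
  (isHermitian_conjTranspose_mul_self M).eigenvalues

theorem Matrix.IsHermitian.exists_eigenvalues_eq_iff {𝕜 ι : Type*} [RCLike 𝕜] [Fintype ι]
    [DecidableEq ι] {A : Matrix ι ι 𝕜} (hA : A.IsHermitian) {μ : ℝ} :
    (∃ i, hA.eigenvalues i = μ) ↔ ∃ v ≠ 0, A *ᵥ v = (μ : 𝕜) • v := by
  rw [← Set.mem_range, ← hA.spectrum_real_eq_range_eigenvalues, ← spectrum.algebraMap_mem_iff 𝕜,
    ← spectrum_toLin', ← Module.End.hasEigenvalue_iff_mem_spectrum]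
  constructor
  · intro h
    obtain ⟨v, hv⟩ := h.exists_hasEigenvector
    exact ⟨v, hv.2, Module.End.mem_eigenspace_iff.mp hv.1⟩
  · rintro ⟨v, hv, h⟩
    exact Module.End.hasEigenvalue_of_hasEigenvector ⟨Module.End.mem_eigenspace_iff.mpr h, hv⟩

theorem Fin.smul_snoc {n : ℕ} {R M : Type*} [SMul R M] (a : R) (x : Fin n → M) (c : M) :
    a • (Fin.snoc x c : Fin (n + 1) → M) = Fin.snoc (a • x) (a • c) := by
  ext j
  induction j using Fin.lastCases <;> simp

theorem Fin.snoc_eq_zero_iff {n : ℕ} {M : Type*} [Zero M] {x : Fin n → M} {c : M} :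
    (Fin.snoc x c : Fin (n + 1) → M) = 0 ↔ x = 0 ∧ c = 0 := by
  constructor
  · intro h
    exact ⟨funext fun k => by simpa using congrFun h k.castSucc,
      by simpa using congrFun h (.last n)⟩
  · rintro ⟨rfl, rfl⟩
    ext j
    induction j using Fin.lastCases <;> simp

theorem sum_norm_sq_smul {ι 𝕜 E : Type*} [Fintype ι] [NormedField 𝕜] [SeminormedAddCommGroup E]
    [NormedSpace 𝕜 E] (c : 𝕜) (v : ι → E) :
    ∑ i, ‖(c • v) i‖ ^ 2 = ‖c‖ ^ 2 * ∑ i, ‖v i‖ ^ 2 := by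
  simp [norm_smul, mul_pow, Finset.mul_sum]

theorem sum_norm_sq_pos {ι E : Type*} [Fintype ι] [NormedAddCommGroup E] {v : ι → E}
    (hv : v ≠ 0) : 0 < ∑ i, ‖v i‖ ^ 2 := by
  obtain ⟨i, hi⟩ := Function.ne_iff.mp hv
  exact Finset.sum_pos' (fun j _ => by positivity) ⟨i, Finset.mem_univ i, by positivity⟩

theorem star_dotProduct_self_eq_sum_norm_sq {ι : Type*} [Fintype ι] (v : ι → ℂ) :
    star v ⬝ᵥ v = ((∑ i, ‖v i‖ ^ 2 : ℝ) : ℂ) := by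
  simp [dotProduct, Complex.conj_mul']

theorem star_mulVec_dotProduct {ι κ : Type*} [Fintype ι] [Fintype κ] (A : Matrix ι κ ℂ)
    (x : κ → ℂ) (y : ι → ℂ) : star (A *ᵥ x) ⬝ᵥ y = star x ⬝ᵥ (Aᴴ *ᵥ y) := by
  rw [star_mulVec, dotProduct_mulVec]

theorem sum_norm_sq_conjTranspose_mulVec_lt {ι κ : Type*} [Fintype ι] [Fintype κ] [DecidableEq κ]
    {Q : Matrix ι κ ℂ} (hQ : Qᴴ * Q = 1) {z : ι → ℂ} (hz : ¬∃ c, z = Q *ᵥ c) :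
    ∑ k, ‖(Qᴴ *ᵥ z) k‖ ^ 2 < ∑ i, ‖z i‖ ^ 2 := by
  obtain ⟨w, hw⟩ : ∃ w, Qᴴ *ᵥ z = w := ⟨_, rfl⟩
  have hr : z - Q *ᵥ w ≠ 0 := fun h => hz ⟨w, sub_eq_zero.mp h⟩
  have hpyth : ∑ i, ‖(z - Q *ᵥ w) i‖ ^ 2 = ∑ i, ‖z i‖ ^ 2 - ∑ k, ‖w k‖ ^ 2 := by
    apply Complex.ofReal_injective
    have hzw : star z ⬝ᵥ (Q *ᵥ w) = star w ⬝ᵥ w := by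
      rw [dotProduct_mulVec, ← hw, star_mulVec, conjTranspose_conjTranspose]
    rw [← star_dotProduct_self_eq_sum_norm_sq, star_sub, sub_dotProduct, dotProduct_sub,
      dotProduct_sub, star_mulVec_dotProduct, star_mulVec_dotProduct, mulVec_mulVec, hQ, one_mulVec,
      hw, hzw, star_dotProduct_self_eq_sum_norm_sq, star_dotProduct_self_eq_sum_norm_sq]
    push_cast
    ring
  rw [hw]
  linarith [sum_norm_sq_pos hr]

/-- `gramRootMax a b` and `gramRootMin a b` are the roots of `(t - 1)(t - a) = b`; for `a = ‖y‖²`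
and `b = ‖Qᴴy‖²` they are the extreme eigenvalues of `[Q y]ᴴ[Q y]`. -/
noncomputable def gramRootMax (a b : ℝ) : ℝ := (1 + a + √((1 - a) ^ 2 + 4 * b)) / 2

noncomputable def gramRootMin (a b : ℝ) : ℝ := (1 + a - √((1 - a) ^ 2 + 4 * b)) / 2

noncomputable def gramCond (a b : ℝ) : ℝ := √(gramRootMax a b) / √(gramRootMin a b)

section gramRoot

variable {a b : ℝ}

theorem sub_one_mul_sub_eq_iff_eq_gramRoot (hb : 0 ≤ b) {t : ℝ} :
    (t - 1) * (t - a) = b ↔ t = gramRootMax a b ∨ t = gramRootMin a b := by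
  have hd := Real.sq_sqrt (show 0 ≤ (1 - a) ^ 2 + 4 * b by positivity)
  rw [← sub_eq_zero, ← sub_eq_zero (a := t), ← sub_eq_zero (a := t), ← mul_eq_zero,
    gramRootMax, gramRootMin]
  constructor <;> intro h
  · linear_combination h - hd / 4
  · linear_combination h + hd / 4

theorem gramRootMin_le_one (hb : 0 ≤ b) : gramRootMin a b ≤ 1 := by
  have := (abs_le.mp (Real.abs_le_sqrt (show (1 - a) ^ 2 ≤ (1 - a) ^ 2 + 4 * b by linarith))).1
  rw [gramRootMin]
  linarith

theorem one_le_gramRootMax (hb : 0 ≤ b) : 1 ≤ gramRootMax a b := by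
  have := (abs_le.mp (Real.abs_le_sqrt (show (1 - a) ^ 2 ≤ (1 - a) ^ 2 + 4 * b by linarith))).2
  rw [gramRootMax]
  linarith

theorem gramRootMin_le_gramRootMax (hb : 0 ≤ b) : gramRootMin a b ≤ gramRootMax a b :=
  (gramRootMin_le_one hb).trans (one_le_gramRootMax hb)

theorem gramRootMax_add_gramRootMin : gramRootMax a b + gramRootMin a b = 1 + a := by
  rw [gramRootMax, gramRootMin]
  ring

theorem gramRootMax_mul_gramRootMin (hb : 0 ≤ b) : gramRootMax a b * gramRootMin a b = a - b := by
  have hd := Real.sq_sqrt (show 0 ≤ (1 - a) ^ 2 + 4 * b by positivity)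
  rw [gramRootMax, gramRootMin]
  linear_combination -hd / 4

theorem gramRootMin_pos (hb : 0 ≤ b) (hba : b < a) : 0 < gramRootMin a b := by
  have hmax : 0 < gramRootMax a b := zero_lt_one.trans_le (one_le_gramRootMax hb)
  exact pos_of_mul_pos_right ((gramRootMax_mul_gramRootMin hb).symm ▸ sub_pos.mpr hba) hmax.le

theorem gramRootMax_div_gramRootMin_add_inv (hb : 0 ≤ b) (hba : b < a) :
    gramRootMax a b / gramRootMin a b + (gramRootMax a b / gramRootMin a b)⁻¹ =
      (1 + a) ^ 2 / (a - b) - 2 := by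
  have hmin := gramRootMin_pos hb hba
  have hmax : 0 < gramRootMax a b := zero_lt_one.trans_le (one_le_gramRootMax hb)
  rw [inv_div, div_add_div _ _ hmin.ne' hmax.ne', ← gramRootMax_add_gramRootMin,
    ← gramRootMax_mul_gramRootMin hb, mul_comm (gramRootMin a b)]
  field_simp
  ring

theorem le_of_add_inv_le_add_inv {r s : ℝ} (hr : 1 ≤ r) (hs : 1 ≤ s) (h : r + r⁻¹ ≤ s + s⁻¹) :
    r ≤ s := by
  by_contra! hsr
  have hs0 : 0 < s := by linarith
  have hr0 : 0 < r := by linarith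
  have hdiff : r + r⁻¹ - (s + s⁻¹) = (r - s) * (r * s - 1) / (r * s) := by
    field_simp
    ring
  have : 0 < (r - s) * (r * s - 1) / (r * s) :=
    div_pos (mul_pos (by linarith) (by nlinarith)) (by positivity)
  linarith

theorem gramCond_le_gramCond {a' b' : ℝ} (hb : 0 ≤ b) (hba : b < a) (hb' : 0 ≤ b')
    (hba' : b' < a') (h : (1 + a) ^ 2 / (a - b) ≤ (1 + a') ^ 2 / (a' - b')) :
    gramCond a b ≤ gramCond a' b' := by
  have hle : ∀ {a b : ℝ}, 0 ≤ b → b < a → 1 ≤ gramRootMax a b / gramRootMin a b := fun hb hba =>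
    (one_le_div (gramRootMin_pos hb hba)).mpr (gramRootMin_le_gramRootMax hb)
  rw [gramCond, gramCond, ← Real.sqrt_div' _ (gramRootMin_pos hb hba).le,
    ← Real.sqrt_div' _ (gramRootMin_pos hb' hba').le]
  refine Real.sqrt_le_sqrt (le_of_add_inv_le_add_inv (hle hb hba) (hle hb' hba') ?_)
  rw [gramRootMax_div_gramRootMin_add_inv hb hba, gramRootMax_div_gramRootMin_add_inv hb' hba']
  linarith

theorem gramCond_one_zero : gramCond 1 0 = 1 := by
  norm_num [gramCond, gramRootMax, gramRootMin]

end gramRoot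

theorem one_add_mul_sq_div_le {Z B t₀ t : ℝ} (hBZ : B < Z) (ht₀ : 0 < t₀) (ht₀Z : t₀ * Z = 1)
    (ht : 0 < t) : (1 + t₀ * Z) ^ 2 / (t₀ * Z - t₀ * B) ≤ (1 + t * Z) ^ 2 / (t * Z - t * B) := by
  have hZB : 0 < Z - B := sub_pos.mpr hBZ
  rw [← mul_sub, ← mul_sub, ht₀Z, div_le_div_iff₀ (by positivity) (by positivity)]
  linear_combination t₀ * (Z - B) * sq_nonneg (1 - t * Z) - 4 * t * (Z - B) * ht₀Z

section cond2

variable {m n : ℕ} {M : Matrix (Fin m) (Fin (n + 1)) ℂ} {lo hi : ℝ}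

theorem cond2_le_of_mem_Icc (hlo : 0 < lo) (h : ∀ i, gramEigenvalues M i ∈ Set.Icc lo hi) :
    cond2 M ≤ √hi / √lo :=
  div_le_div₀ (Real.sqrt_nonneg _) (ciSup_le fun i => Real.sqrt_le_sqrt (h i).2)
    (Real.sqrt_pos.mpr hlo) (le_ciInf fun i => Real.sqrt_le_sqrt (h i).1)

theorem cond2_eq_of_mem_Icc (h : ∀ i, gramEigenvalues M i ∈ Set.Icc lo hi)
    (hhi : ∃ i, gramEigenvalues M i = hi) (hlo : ∃ i, gramEigenvalues M i = lo) :
    cond2 M = √hi / √lo := by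
  obtain ⟨i, hiM⟩ := hhi
  obtain ⟨j, hjM⟩ := hlo
  have hsup : (⨆ i, √(gramEigenvalues M i)) = √hi :=
    le_antisymm (ciSup_le fun i => Real.sqrt_le_sqrt (h i).2)
      (hiM ▸ le_ciSup (f := fun i => √(gramEigenvalues M i)) (Set.finite_range _).bddAbove i)
  have hinf : (⨅ i, √(gramEigenvalues M i)) = √lo :=
    le_antisymm
      (hjM ▸ ciInf_le (f := fun i => √(gramEigenvalues M i)) (Set.finite_range _).bddBelow j)
      (le_ciInf fun i => Real.sqrt_le_sqrt (h i).1)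
  rw [cond2, hsup, hinf]

theorem one_le_cond2 (hlo : 0 < lo) (h : ∀ i, lo ≤ gramEigenvalues M i) : 1 ≤ cond2 M := by
  have hinf : 0 < ⨅ i, √(gramEigenvalues M i) :=
    (Real.sqrt_pos.mpr hlo).trans_le (le_ciInf fun i => Real.sqrt_le_sqrt (h i))
  exact (one_le_div hinf).mpr
    (ciInf_le_ciSup (Set.finite_range _).bddBelow (Set.finite_range _).bddAbove)

end cond2

section appendCol

variable {m n : ℕ} {Q : Matrix (Fin m) (Fin n) ℂ} (y : Fin m → ℂ)

theorem appendCol_mulVec_snoc (x : Fin n → ℂ) (c : ℂ) :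
    appendCol Q y *ᵥ Fin.snoc x c = Q *ᵥ x + c • y := by
  ext i
  simp [appendCol, mulVec, dotProduct, Fin.sum_univ_castSucc, mul_comm]

theorem conjTranspose_appendCol_mulVec (u : Fin m → ℂ) :
    (appendCol Q y)ᴴ *ᵥ u = Fin.snoc (Qᴴ *ᵥ u) (star y ⬝ᵥ u) := by
  ext j
  induction j using Fin.lastCases with
  | last => simp [appendCol, conjTranspose, mulVec, dotProduct, mul_comm]
  | cast k => simp [appendCol, conjTranspose, mulVec, dotProduct]

theorem gram_appendCol_mulVec_snoc (hQ : Qᴴ * Q = 1) (x : Fin n → ℂ) (c : ℂ) :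
    ((appendCol Q y)ᴴ * appendCol Q y) *ᵥ Fin.snoc x c =
      Fin.snoc (x + c • (Qᴴ *ᵥ y)) (star (Qᴴ *ᵥ y) ⬝ᵥ x + c * (star y ⬝ᵥ y)) := by
  rw [← mulVec_mulVec, appendCol_mulVec_snoc, conjTranspose_appendCol_mulVec, mulVec_add,
    mulVec_mulVec, hQ, one_mulVec, mulVec_smul, dotProduct_add, dotProduct_smul,
    dotProduct_mulVec, star_mulVec, conjTranspose_conjTranspose, smul_eq_mul]

theorem eq_one_or_of_gram_appendCol_mulVec_eq (hQ : Qᴴ * Q = 1) {v : Fin (n + 1) → ℂ}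
    (hv : v ≠ 0) {μ : ℝ} (h : ((appendCol Q y)ᴴ * appendCol Q y) *ᵥ v = (μ : ℂ) • v) :
    μ = 1 ∨ (μ - 1) * (μ - ∑ i, ‖y i‖ ^ 2) = ∑ k, ‖(Qᴴ *ᵥ y) k‖ ^ 2 := by
  obtain ⟨x, c, rfl⟩ : ∃ x c, v = Fin.snoc x c :=
    ⟨Fin.init v, v (Fin.last n), (Fin.snoc_init_self v).symm⟩
  rw [gram_appendCol_mulVec_snoc y hQ, Fin.smul_snoc] at h
  obtain ⟨hx, hc⟩ := Fin.snoc_injective2 h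
  refine or_iff_not_imp_left.mpr fun hμ => ?_
  have hμ' : (μ : ℂ) - 1 ≠ 0 := sub_ne_zero.mpr (by exact_mod_cast hμ)
  have hxw : ((μ : ℂ) - 1) • x = c • (Qᴴ *ᵥ y) := by
    rw [sub_smul, one_smul, ← hx]
    abel
  have hc0 : c ≠ 0 := by
    rintro rfl
    rw [zero_smul, smul_eq_zero_iff_right hμ'] at hxw
    exact hv (Fin.snoc_eq_zero_iff.mpr ⟨hxw, rfl⟩)
  have hdot := congrArg (star (Qᴴ *ᵥ y) ⬝ᵥ ·) hxw
  simp only [dotProduct_smul, smul_eq_mul, star_dotProduct_self_eq_sum_norm_sq] at hdot hc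
  apply Complex.ofReal_injective
  apply mul_left_cancel₀ hc0
  push_cast at hdot hc ⊢
  linear_combination (1 - (μ : ℂ)) * hc + hdot

theorem exists_gramEigenvalues_appendCol_eq [NeZero n] (hQ : Qᴴ * Q = 1) {μ : ℝ}
    (hμ : (μ - 1) * (μ - ∑ i, ‖y i‖ ^ 2) = ∑ k, ‖(Qᴴ *ᵥ y) k‖ ^ 2) :
    ∃ i, gramEigenvalues (appendCol Q y) i = μ := by
  rw [IsHermitian.exists_eigenvalues_eq_iff, RCLike.ofReal_eq_complex_ofReal]
  -- `(Qᴴy, μ - 1)` is an eigenvector, unless `μ = 1`; then `b = 0`, and any `(x, 0)` is one.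
  by_cases hμ1 : μ = 1
  · have hw : Qᴴ *ᵥ y = 0 := by
      by_contra hw
      have := sum_norm_sq_pos hw
      rw [← hμ, hμ1, sub_self, zero_mul] at this
      exact this.false
    refine ⟨Fin.snoc (fun _ => 1) 0, fun h => ?_, ?_⟩
    · exact one_ne_zero (congrFun (Fin.snoc_eq_zero_iff.mp h).1 0)
    · rw [gram_appendCol_mulVec_snoc y hQ, hw, hμ1]
      simp
  · have hμ' : (μ : ℂ) - 1 ≠ 0 := sub_ne_zero.mpr (by exact_mod_cast hμ1)
    refine ⟨Fin.snoc (Qᴴ *ᵥ y) ((μ : ℂ) - 1), fun h => hμ' (Fin.snoc_eq_zero_iff.mp h).2, ?_⟩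
    rw [gram_appendCol_mulVec_snoc y hQ, Fin.smul_snoc, star_dotProduct_self_eq_sum_norm_sq,
      star_dotProduct_self_eq_sum_norm_sq]
    congr 1
    · module
    · rw [← hμ, smul_eq_mul]
      push_cast
      ring

theorem gramEigenvalues_appendCol_mem_Icc (hQ : Qᴴ * Q = 1) (i : Fin (n + 1)) :
    gramEigenvalues (appendCol Q y) i ∈ Set.Icc
      (gramRootMin (∑ i, ‖y i‖ ^ 2) (∑ k, ‖(Qᴴ *ᵥ y) k‖ ^ 2))
      (gramRootMax (∑ i, ‖y i‖ ^ 2) (∑ k, ‖(Qᴴ *ᵥ y) k‖ ^ 2)) := by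
  have hb : 0 ≤ ∑ k, ‖(Qᴴ *ᵥ y) k‖ ^ 2 := by positivity
  obtain ⟨v, hv, h⟩ :=
    (isHermitian_conjTranspose_mul_self (appendCol Q y)).exists_eigenvalues_eq_iff.mp ⟨i, rfl⟩
  rcases eq_one_or_of_gram_appendCol_mulVec_eq y hQ hv (μ := gramEigenvalues _ i) h with h1 | h1
  · rw [h1]
    exact ⟨gramRootMin_le_one hb, one_le_gramRootMax hb⟩
  · rcases (sub_one_mul_sub_eq_iff_eq_gramRoot hb).mp h1 with h2 | h2 <;> rw [h2]
    · exact ⟨gramRootMin_le_gramRootMax hb, le_rfl⟩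
    · exact ⟨le_rfl, gramRootMin_le_gramRootMax hb⟩

theorem cond2_appendCol_le (hQ : Qᴴ * Q = 1) {a b : ℝ} (ha : ∑ i, ‖y i‖ ^ 2 = a)
    (hb : ∑ k, ‖(Qᴴ *ᵥ y) k‖ ^ 2 = b) (hba : b < a) : cond2 (appendCol Q y) ≤ gramCond a b := by
  subst ha hb
  exact cond2_le_of_mem_Icc (gramRootMin_pos (by positivity) hba)
    (gramEigenvalues_appendCol_mem_Icc y hQ)

theorem one_le_cond2_appendCol (hQ : Qᴴ * Q = 1) {a b : ℝ} (ha : ∑ i, ‖y i‖ ^ 2 = a)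
    (hb : ∑ k, ‖(Qᴴ *ᵥ y) k‖ ^ 2 = b) (hba : b < a) : 1 ≤ cond2 (appendCol Q y) := by
  subst ha hb
  exact one_le_cond2 (gramRootMin_pos (by positivity) hba)
    fun i => (gramEigenvalues_appendCol_mem_Icc y hQ i).1

theorem cond2_appendCol_eq [NeZero n] (hQ : Qᴴ * Q = 1) {a b : ℝ} (ha : ∑ i, ‖y i‖ ^ 2 = a)
    (hb : ∑ k, ‖(Qᴴ *ᵥ y) k‖ ^ 2 = b) : cond2 (appendCol Q y) = gramCond a b := by
  subst ha hb
  have hb : 0 ≤ ∑ k, ‖(Qᴴ *ᵥ y) k‖ ^ 2 := by positivity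
  exact cond2_eq_of_mem_Icc (gramEigenvalues_appendCol_mem_Icc y hQ)
    (exists_gramEigenvalues_appendCol_eq y hQ
      ((sub_one_mul_sub_eq_iff_eq_gramRoot hb).mpr (.inl rfl)))
    (exists_gramEigenvalues_appendCol_eq y hQ
      ((sub_one_mul_sub_eq_iff_eq_gramRoot hb).mpr (.inr rfl)))

end appendCol

theorem stmt13_general {m n : ℕ} (Q : Matrix (Fin m) (Fin n) ℂ)
    (hQ : Qᴴ * Q = 1) (z : Fin m → ℂ)
    (hzQ : ¬∃ c : Fin n → ℂ, z = Q *ᵥ c) :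
    ∀ δ : ℝ, 0 < δ →
      cond2 (appendCol Q ((((Real.sqrt (∑ i, ‖z i‖ ^ 2))⁻¹ : ℝ) : ℂ) • z)) ≤
        cond2 (appendCol Q ((δ : ℂ) • z)) := by
  intro δ hδ
  set Z := ∑ i, ‖z i‖ ^ 2
  set B := ∑ k, ‖(Qᴴ *ᵥ z) k‖ ^ 2
  have hB : 0 ≤ B := by positivity
  have hBZ : B < Z := sum_norm_sq_conjTranspose_mulVec_lt hQ hzQ
  have hZ : 0 < Z := hB.trans_lt hBZ
  have hsumZ (c : ℂ) : ∑ i, ‖(c • z) i‖ ^ 2 = ‖c‖ ^ 2 * Z := sum_norm_sq_smul c z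
  have hsumB (c : ℂ) : ∑ k, ‖(Qᴴ *ᵥ (c • z)) k‖ ^ 2 = ‖c‖ ^ 2 * B := by
    rw [mulVec_smul, sum_norm_sq_smul]
  have ht₀Z : ‖(((√Z)⁻¹ : ℝ) : ℂ)‖ ^ 2 * Z = 1 := by
    rw [Complex.norm_real, Real.norm_eq_abs, sq_abs, inv_pow, Real.sq_sqrt hZ.le,
      inv_mul_cancel₀ hZ.ne']
  have ht : 0 < ‖(δ : ℂ)‖ ^ 2 := by simpa using pow_pos hδ 2
  set t₀ := ‖(((√Z)⁻¹ : ℝ) : ℂ)‖ ^ 2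
  set t := ‖(δ : ℂ)‖ ^ 2
  have ht₀ : 0 < t₀ := pos_of_mul_pos_left (ht₀Z ▸ one_pos) hZ.le
  have hle₀ : cond2 (appendCol Q ((((√Z)⁻¹ : ℝ) : ℂ) • z)) ≤ gramCond (t₀ * Z) (t₀ * B) :=
    cond2_appendCol_le _ hQ (hsumZ _) (hsumB _) (mul_lt_mul_of_pos_left hBZ ht₀)
  rcases n.eq_zero_or_pos with rfl | hn
  · have hB0 : B = 0 := Finset.sum_of_isEmpty _
    calc _ ≤ gramCond (t₀ * Z) (t₀ * B) := hle₀
      _ = 1 := by rw [ht₀Z, hB0, mul_zero, gramCond_one_zero]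
      _ ≤ _ := one_le_cond2_appendCol _ hQ (hsumZ _) (hsumB _) (mul_lt_mul_of_pos_left hBZ ht)
  · have : NeZero n := ⟨hn.ne'⟩
    calc _ ≤ gramCond (t₀ * Z) (t₀ * B) := hle₀
      _ ≤ gramCond (t * Z) (t * B) :=
        gramCond_le_gramCond (by positivity) (mul_lt_mul_of_pos_left hBZ ht₀) (by positivity)
          (mul_lt_mul_of_pos_left hBZ ht) (one_add_mul_sq_div_le hBZ ht₀ ht₀Z ht)
      _ = _ := (cond2_appendCol_eq _ hQ (hsumZ _) (hsumB _)).symm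

/-- among all scalings `δ > 0`, the choice `δ = 1/‖z‖` minimizes
the spectral condition number `κ₂([Q δz])`. -/
theorem stmt13 {m n : ℕ} (hmn : n < m) (Q : Matrix (Fin m) (Fin n) ℂ)
    (hQ : Qᴴ * Q = 1) (z : Fin m → ℂ) (hz : z ≠ 0)
    (hzQ : ¬∃ c : Fin n → ℂ, z = Q *ᵥ c) :
    ∀ δ : ℝ, 0 < δ →
      cond2 (appendCol Q ((((Real.sqrt (∑ i, ‖z i‖ ^ 2))⁻¹ : ℝ) : ℂ) • z)) ≤
        cond2 (appendCol Q ((δ : ℂ) • z)) :=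
  stmt13_general Q hQ z hzQ
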